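/- There are cuts φ₀(x) and φ₁(x) such that PA⁻ proves both ∀x φ₀(x) ↔ ∀x φ₁(x) and ∀x( φ₀(x) → φ₁(x) ), but PA⁻ does not prove ∀x( φ₁(x) → φ₀(x) ). -/

import Mathlib

open FirstOrder Language

/-! ### The language `L_OR = {0, 1, +, ×, <}` of ordered rings -/

/-- Function symbols of the language of ordered rings. -/
inductive LorFunc : ℕ → Type
  | zero : LorFunc 0
  | one : LorFunc 0
  | add : LorFunc 2
  | mul : LorFunc 2

/-- Relation symbols of the language of ordered rings: just `<`. -/
inductive LorRel : ℕ → Type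
  | lt : LorRel 2

/-- The first-order language of ordered rings. -/
def Lor : Language := ⟨LorFunc, LorRel⟩

/-- The term `0`. -/
def zeroT {α : Type} : Lor.Term α := Constants.term LorFunc.zero

/-- The term `1`. -/
def oneT {α : Type} : Lor.Term α := Constants.term LorFunc.one

/-- Addition of terms. -/
def addT {α : Type} (t u : Lor.Term α) : Lor.Term α := Functions.apply₂ LorFunc.add t u

/-- Multiplication of terms. -/
def mulT {α : Type} (t u : Lor.Term α) : Lor.Term α := Functions.apply₂ LorFunc.mul t u

/-- The term `2`, an abbreviation for `1 + 1`. -/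
def twoT {α : Type} : Lor.Term α := addT oneT oneT

/-- The numeral `k`, i.e. the closed term `(⋯((0+1)+1)+⋯+1)` with `k` ones. -/
def numT {α : Type} : ℕ → Lor.Term α
  | 0 => zeroT
  | n + 1 => addT (numT n) oneT

/-- The bounded formula `t < u`. -/
def ltBF {α : Type} {n : ℕ} (t u : Lor.Term (α ⊕ Fin n)) : Lor.BoundedFormula α n :=
  Relations.boundedFormula₂ LorRel.lt t u

/-- The formula `t < u`. -/
def ltFml {α : Type} (t u : Lor.Term α) : Lor.Formula α :=
  Relations.formula₂ LorRel.lt t u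

/-- The formula `t ≤ u`, an abbreviation for `t < u ∨ t = u`. -/
def leFml {α : Type} (t u : Lor.Term α) : Lor.Formula α :=
  ltFml t u ⊔ Term.equal t u

/-! ### The base theory `PA⁻` -/

/-- `PA⁻`, the theory of non-negative parts of discretely ordered rings. -/
def PAminus : Lor.Theory :=
  { -- (P1) associativity of +
    ∀' ∀' ∀' (addT (addT &0 &1) &2 =' addT &0 (addT &1 &2)),
    -- (P2) commutativity of +
    ∀' ∀' (addT &0 &1 =' addT &1 &0),
    -- (P3) associativity of ×
    ∀' ∀' ∀' (mulT (mulT &0 &1) &2 =' mulT &0 (mulT &1 &2)),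
    -- (P4) commutativity of ×
    ∀' ∀' (mulT &0 &1 =' mulT &1 &0),
    -- (P5) distributivity
    ∀' ∀' ∀' (mulT &0 (addT &1 &2) =' addT (mulT &0 &1) (mulT &0 &2)),
    -- (P6) x + 0 = x
    ∀' (addT &0 zeroT =' &0),
    -- (P7) x × 0 = 0
    ∀' (mulT &0 zeroT =' zeroT),
    -- (P8) x × 1 = x
    ∀' (mulT &0 oneT =' &0),
    -- (P9) transitivity of <
    ∀' ∀' ∀' (ltBF &0 &1 ⊓ ltBF &1 &2 ⟹ ltBF &0 &2),
    -- (P10) irreflexivity of <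
    ∀' ∼(ltBF &0 &0),
    -- (P11) linearity of <
    ∀' ∀' (ltBF &0 &1 ⊔ &0 =' &1 ⊔ ltBF &1 &0),
    -- (P12) x < y → x + z < y + z
    ∀' ∀' ∀' (ltBF &0 &1 ⟹ ltBF (addT &0 &2) (addT &1 &2)),
    -- (P13) z ≠ 0 ∧ x < y → x × z < y × z
    ∀' ∀' ∀' (∼(&2 =' zeroT) ⊓ ltBF &0 &1 ⟹ ltBF (mulT &0 &2) (mulT &1 &2)),
    -- (P14) x < y ↔ ∃z ((x + z) + 1 = y)
    ∀' ∀' (ltBF &0 &1 ⇔ ∃' (addT (addT &0 &2) oneT =' &1)),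
    -- (P15) 0 < 1 ∧ (x > 0 → x ≥ 1)
    ltBF zeroT oneT ⊓ ∀' (ltBF zeroT &0 ⟹ ltBF oneT &0 ⊔ oneT =' &0),
    -- (P16) x ≥ 0
    ∀' (ltBF zeroT &0 ⊔ zeroT =' &0) }

/-! ### Formulas `θ(x, z̄)` with a distinguished variable `x` and parameters `z̄`

A formula `θ(x, z̄)` with `m` parameters `z̄` and a distinguished induction
variable `x` is represented as `θ : Lor.Formula (Fin m ⊕ Fin 1)`, where the
`Fin m` component gives the parameters and the `Fin 1` component gives `x`. -/

/-- The distinguished variable `x` as a term. -/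
def xT {m : ℕ} : Lor.Term (Fin m ⊕ Fin 1) := Term.var (Sum.inr 0)

/-- `θ(t, z̄)`, where `t` is a term possibly involving `x` and the parameters. -/
def substX {m : ℕ} (θ : Lor.Formula (Fin m ⊕ Fin 1)) (t : Lor.Term (Fin m ⊕ Fin 1)) :
    Lor.Formula (Fin m ⊕ Fin 1) :=
  θ.subst (Sum.elim (fun i => Term.var (Sum.inl i)) fun _ => t)

/-- `θ(t, z̄)` where `t` is a term in the parameters only. -/
def substP {m : ℕ} (θ : Lor.Formula (Fin m ⊕ Fin 1)) (t : Lor.Term (Fin m)) :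
    Lor.Formula (Fin m) :=
  θ.subst (Sum.elim (fun i => Term.var i) fun _ => t)

/-- `Formula.iAlls` as it was defined in the older Mathlib (relabelling map first). -/
noncomputable def iAllsOld {L : Language} {α β γ : Type*} [Finite γ] (f : α → β ⊕ γ)
    (φ : L.Formula α) : L.Formula β :=
  let e := Classical.choice (Classical.choose_spec (Finite.exists_equiv_fin γ))
  (BoundedFormula.relabel (fun a => Sum.map id e (f a)) φ).alls

/-- `∀x θ(x, z̄)`. -/
noncomputable def allX {m : ℕ} (θ : Lor.Formula (Fin m ⊕ Fin 1)) : Lor.Formula (Fin m) :=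
  iAllsOld (fun p => p : Fin m ⊕ Fin 1 → Fin m ⊕ Fin 1) θ

/-- The universal closure of a formula, as a sentence. -/
noncomputable def closeAll {α : Type} [Finite α] (φ : Lor.Formula α) : Lor.Sentence :=
  iAllsOld (Sum.inr : α → Empty ⊕ α) φ

/-- `∀x' < x, θ(x', z̄)`, a formula with free variable `x` (and parameters). -/
noncomputable def allLtX {m : ℕ} (θ : Lor.Formula (Fin m ⊕ Fin 1)) :
    Lor.Formula (Fin m ⊕ Fin 1) :=
  iAllsOld (fun p => p : (Fin m ⊕ Fin 1) ⊕ Fin 1 → (Fin m ⊕ Fin 1) ⊕ Fin 1)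
    (ltFml (Term.var (Sum.inr 0)) (Term.var (Sum.inl (Sum.inr 0))) ⟹
      θ.relabel (Sum.elim (fun i => Sum.inl (Sum.inl i)) fun _ => Sum.inr 0))

/-- `∀x' ≤ x, θ(x', z̄)`, a formula with free variable `x` (and parameters). -/
noncomputable def allLeX {m : ℕ} (θ : Lor.Formula (Fin m ⊕ Fin 1)) :
    Lor.Formula (Fin m ⊕ Fin 1) :=
  iAllsOld (fun p => p : (Fin m ⊕ Fin 1) ⊕ Fin 1 → (Fin m ⊕ Fin 1) ⊕ Fin 1)
    (leFml (Term.var (Sum.inr 0)) (Term.var (Sum.inl (Sum.inr 0))) ⟹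
      θ.relabel (Sum.elim (fun i => Sum.inl (Sum.inl i)) fun _ => Sum.inr 0))

/-- The conjunction `⋀_{k<j} θ(k, z̄)`. -/
def conjNum {m : ℕ} (θ : Lor.Formula (Fin m ⊕ Fin 1)) : ℕ → Lor.Formula (Fin m)
  | 0 => ⊤
  | j + 1 => conjNum θ j ⊓ substP θ (numT j)

/-- The conjunction `⋀_{k<j} θ(x+k, z̄)`. -/
def conjShift {m : ℕ} (θ : Lor.Formula (Fin m ⊕ Fin 1)) : ℕ → Lor.Formula (Fin m ⊕ Fin 1)
  | 0 => ⊤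
  | j + 1 => conjShift θ j ⊓ substX θ (addT xT (numT j))

/-! ### Induction axioms -/

/-- The induction axiom `I_x θ`:
`∀z̄( θ(0,z̄) ∧ ∀x(θ(x,z̄) → θ(x+1,z̄)) → ∀x θ(x,z̄) )`. -/
noncomputable def indAx {m : ℕ} (θ : Lor.Formula (Fin m ⊕ Fin 1)) : Lor.Sentence :=
  closeAll ((substP θ zeroT ⊓ allX (θ ⟹ substX θ (addT xT oneT))) ⟹ allX θ)

/-- The `<`-induction axiom `I^<_x θ`:
`∀z̄( ∀y(∀x<y θ(x,z̄) → θ(y,z̄)) → ∀x θ(x,z̄) )`. -/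
noncomputable def indLtAx {m : ℕ} (θ : Lor.Formula (Fin m ⊕ Fin 1)) : Lor.Sentence :=
  closeAll (allX (allLtX θ ⟹ θ) ⟹ allX θ)

/-- The `(n+1)`-step induction axiom `I^{(n+1)-step}_x θ`:
`∀z̄( ⋀_{k<n+1} θ(k,z̄) ∧ ∀x(θ(x,z̄) → θ(x+n+1,z̄)) → ∀x θ(x,z̄) )`. -/
noncomputable def indStepAx {m : ℕ} (n : ℕ) (θ : Lor.Formula (Fin m ⊕ Fin 1)) : Lor.Sentence :=
  closeAll ((conjNum θ (n + 1) ⊓ allX (θ ⟹ substX θ (addT xT (numT (n + 1))))) ⟹ allX θ)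

/-- The `(n+1)`-induction axiom `I^{n+1}_x θ`:
`∀z̄( ⋀_{k<n+1} θ(k,z̄) ∧ ∀x(⋀_{k<n+1} θ(x+k,z̄) → θ(x+n+1,z̄)) → ∀x θ(x,z̄) )`. -/
noncomputable def indKAx {m : ℕ} (n : ℕ) (θ : Lor.Formula (Fin m ⊕ Fin 1)) : Lor.Sentence :=
  closeAll ((conjNum θ (n + 1) ⊓ allX (conjShift θ (n + 1) ⟹ substX θ (addT xT (numT (n + 1))))) ⟹
    allX θ)

/-- The polynomial induction axiom `I^p_x θ`:
`∀z̄( θ(0,z̄) ∧ ∀x(θ(x,z̄) → θ(2x,z̄) ∧ θ(2x+1,z̄)) → ∀x θ(x,z̄) )`, where `2x` is `(1+1)×x`. -/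
noncomputable def indPAx {m : ℕ} (θ : Lor.Formula (Fin m ⊕ Fin 1)) : Lor.Sentence :=
  closeAll ((substP θ zeroT ⊓
      allX (θ ⟹ substX θ (mulT twoT xT) ⊓ substX θ (addT (mulT twoT xT) oneT))) ⟹ allX θ)

/-! ### Theories -/

/-- Peano arithmetic: `PA⁻` plus induction for all `L_OR` formulas. -/
noncomputable def PA : Lor.Theory :=
  PAminus ∪ {σ | ∃ (m : ℕ) (θ : Lor.Formula (Fin m ⊕ Fin 1)), σ = indAx θ}

/-- `IOpen`: `PA⁻` plus induction for all quantifier-free `L_OR` formulas. -/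
noncomputable def IOpen : Lor.Theory :=
  PAminus ∪ {σ | ∃ (m : ℕ) (θ : Lor.Formula (Fin m ⊕ Fin 1)), θ.IsQF ∧ σ = indAx θ}

/-! ### Notions of inductiveness

A formula `φ(x)` with exactly one free variable `x` is represented as
`φ : Lor.Formula (Fin 0 ⊕ Fin 1)` (no parameters). -/

/-- Formulas `φ(x)` with exactly one free variable `x`. -/
abbrev OneVarFormula : Type := Lor.Formula (Fin 0 ⊕ Fin 1)

/-- The sentence `∀x φ(x)`. -/
noncomputable def allS (φ : OneVarFormula) : Lor.Sentence := closeAll (allX φ)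

/-- `φ(x)` is inductive: `PA⁻ ⊢ φ(0)` and `PA⁻ ⊢ ∀x(φ(x) → φ(x+1))`. -/
noncomputable def IsInductive (φ : OneVarFormula) : Prop :=
  PAminus ⊨ᵇ closeAll (substP φ zeroT) ∧
    PAminus ⊨ᵇ closeAll (allX (φ ⟹ substX φ (addT xT oneT)))

/-- `φ(x)` is `<`-inductive: `PA⁻ ⊢ ∀y(∀x<y φ(x) → φ(y))`. -/
noncomputable def IsLtInductive (φ : OneVarFormula) : Prop :=
  PAminus ⊨ᵇ closeAll (allX (allLtX φ ⟹ φ))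

/-- `φ(x)` is `(n+1)`-step inductive:
`PA⁻ ⊢ ⋀_{k<n+1} φ(k) ∧ ∀x(φ(x) → φ(x+n+1))`. -/
noncomputable def IsStepInductive (n : ℕ) (φ : OneVarFormula) : Prop :=
  PAminus ⊨ᵇ closeAll (conjNum φ (n + 1) ⊓ allX (φ ⟹ substX φ (addT xT (numT (n + 1)))))

/-- `φ(x)` is `(n+1)`-inductive:
`PA⁻ ⊢ ⋀_{k<n+1} φ(k) ∧ ∀x(⋀_{k<n+1} φ(x+k) → φ(x+n+1))`. -/
noncomputable def IsKInductive (n : ℕ) (φ : OneVarFormula) : Prop :=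
  PAminus ⊨ᵇ
    closeAll (conjNum φ (n + 1) ⊓ allX (conjShift φ (n + 1) ⟹ substX φ (addT xT (numT (n + 1)))))

/-- `φ(x)` is p-inductive (polynomially inductive):
`PA⁻ ⊢ φ(0) ∧ ∀x(φ(x) → φ(2x) ∧ φ(2x+1))`. -/
noncomputable def IsPInductive (φ : OneVarFormula) : Prop :=
  PAminus ⊨ᵇ closeAll (substP φ zeroT ⊓
    allX (φ ⟹ substX φ (mulT twoT xT) ⊓ substX φ (addT (mulT twoT xT) oneT)))

/-! ### Cuts -/

/-- `φ(x)` is a cut: an inductive formula with `PA⁻ ⊢ ∀x∀y(x<y ∧ φ(y) → φ(x))`. -/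
noncomputable def IsCut (φ : OneVarFormula) : Prop :=
  IsInductive φ ∧
    PAminus ⊨ᵇ closeAll
      (ltFml (Term.var (Sum.inr 0) : Lor.Term (Fin 0 ⊕ Fin 2)) (Term.var (Sum.inr 1)) ⊓
          φ.relabel (Sum.elim (fun i => Sum.inl i) fun _ => Sum.inr 1) ⟹
        φ.relabel (Sum.elim (fun i => Sum.inl i) fun _ => Sum.inr 0))

/-- `φ(x)` is an a-cut: a cut with `PA⁻ ⊢ ∀x(φ(x) → φ(x+x))`. -/
noncomputable def IsACut (φ : OneVarFormula) : Prop :=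
  IsCut φ ∧ PAminus ⊨ᵇ closeAll (allX (φ ⟹ substX φ (addT xT xT)))

/-- `φ(x)` is an am-cut: an a-cut with `PA⁻ ⊢ ∀x(φ(x) → φ(x×x))`. -/
noncomputable def IsAMCut (φ : OneVarFormula) : Prop :=
  IsACut φ ∧ PAminus ⊨ᵇ closeAll (allX (φ ⟹ substX φ (mulT xT xT)))


/-!
`φ₀(x)` says that every `y ≤ x` is even or odd (of the form `z + z` or `z + z + 1`), and `φ₁(x)`
says the same of every `y` with `y + y ≤ x`. Both are cuts, `φ₀` implies `φ₁` because
`y ≤ y + y`, and `∀x φ₁(x)` implies `∀x φ₀(x)` because `φ₁(y + y)` covers `y`.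

The converse implication fails in the non-negative part of `ℤ[X]`, ordered by the sign of the
leading coefficient. This is a discretely ordered ring, so its non-negative part is a model of
`PA⁻`. In it, every `y` with `y + y ≤ X` is a constant, hence even or odd, so `φ₁(X)` holds; but
`X` itself is neither even nor odd, so `φ₀(X)` fails.
-/

open FirstOrder Language Structure

@[simp] lemma realize_iAllsOld {L : Language} {M : Type*} [L.Structure M] {α β γ : Type*}
    [Finite γ] (f : α → β ⊕ γ) (φ : L.Formula α) (v : β → M) :
    (iAllsOld f φ).Realize v ↔ ∀ i : γ → M, φ.Realize (fun a => Sum.elim v i (f a)) := by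
  let e := Classical.choice (Classical.choose_spec (Finite.exists_equiv_fin γ))
  rw [iAllsOld]
  simp only [Nat.add_zero, BoundedFormula.realize_alls, BoundedFormula.realize_relabel,
    Function.comp_def, Fin.castAdd_zero]
  refine Equiv.forall_congr ⟨fun v => v ∘ e, fun v => v ∘ e.symm,
      fun _ => by simp [Function.comp_def],
      fun _ => by simp [Function.comp_def]⟩ ?_
  intro x
  rw [Formula.Realize, iff_iff_eq]
  congr
  · funext a
    rcases f a with b | c <;> simp [e]
  · funext i
    exact i.elim0

section Semantics

variable {M : Type*} [Lor.Structure M]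

@[simp] lemma sumElim_finZero_const {β : Type*} (f : Fin 0 → β) (b : β) :
    Sum.elim f (fun _ : Fin 1 => b) = fun _ => b := by
  funext a
  rcases a with i | i
  · exact i.elim0
  · rfl

@[simp] lemma realize_closeAll {α : Type} [Finite α] (φ : Lor.Formula α) :
    M ⊨ closeAll φ ↔ ∀ v : α → M, φ.Realize v := by
  simp [Sentence.Realize, closeAll]

@[simp] lemma realize_allX {m : ℕ} (θ : Lor.Formula (Fin m ⊕ Fin 1)) (v : Fin m → M) :
    (allX θ).Realize v ↔ ∀ x : M, θ.Realize (Sum.elim v fun _ => x) := by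
  rw [allX, realize_iAllsOld]
  refine ⟨fun h x => h fun _ => x, fun h i => ?_⟩
  rw [show i = fun _ => i 0 from funext fun j => congrArg i (Subsingleton.elim j 0)]
  exact h (i 0)

@[simp] lemma realize_substP {m : ℕ} (θ : Lor.Formula (Fin m ⊕ Fin 1)) (t : Lor.Term (Fin m))
    (v : Fin m → M) :
    (substP θ t).Realize v ↔ θ.Realize (Sum.elim v fun _ => t.realize v) := by
  simp only [substP, Formula.Realize, BoundedFormula.realize_subst]
  refine iff_of_eq (congrArg (BoundedFormula.Realize θ · default) (funext fun a => ?_))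
  rcases a with i | i <;> rfl

@[simp] lemma realize_substX {m : ℕ} (θ : Lor.Formula (Fin m ⊕ Fin 1))
    (t : Lor.Term (Fin m ⊕ Fin 1)) (v : Fin m ⊕ Fin 1 → M) :
    (substX θ t).Realize v ↔ θ.Realize (Sum.elim (v ∘ Sum.inl) fun _ => t.realize v) := by
  simp only [substX, Formula.Realize, BoundedFormula.realize_subst]
  refine iff_of_eq (congrArg (BoundedFormula.Realize θ · default) (funext fun a => ?_))
  rcases a with i | i <;> rfl

end Semantics

namespace Lor

variable (M : Type*) [Lor.Structure M]

abbrev instZero : Zero M := ⟨funMap (L := Lor) LorFunc.zero ![]⟩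
abbrev instOne : One M := ⟨funMap (L := Lor) LorFunc.one ![]⟩
abbrev instAdd : Add M := ⟨fun a b => funMap (L := Lor) LorFunc.add ![a, b]⟩
abbrev instMul : Mul M := ⟨fun a b => funMap (L := Lor) LorFunc.mul ![a, b]⟩
abbrev instLT : LT M := ⟨fun a b => RelMap (L := Lor) LorRel.lt ![a, b]⟩

end Lor

/-- The axioms (P1)–(P16) of `PA⁻`, each in the shape `simp` gives to its realization. -/
structure PAminusAxioms (M : Type*) [Zero M] [One M] [Add M] [Mul M] [LT M] : Prop where
  add_assoc : ∀ a b c : M, a + b + c = a + (b + c)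
  add_comm : ∀ a b : M, a + b = b + a
  mul_assoc : ∀ a b c : M, a * b * c = a * (b * c)
  mul_comm : ∀ a b : M, a * b = b * a
  mul_add : ∀ a b c : M, a * (b + c) = a * b + a * c
  add_zero : ∀ a : M, a + 0 = a
  mul_zero : ∀ a : M, a * 0 = 0
  mul_one : ∀ a : M, a * 1 = a
  lt_trans : ∀ a b c : M, a < b → b < c → a < c
  lt_irrefl : ∀ a : M, ¬a < a
  lt_trichotomy : ∀ a b : M, (a < b ∨ a = b) ∨ b < a
  add_lt_add_right : ∀ a b c : M, a < b → a + c < b + c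
  mul_lt_mul_right : ∀ a b c : M, ¬c = 0 → a < b → a * c < b * c
  lt_iff_exists_add_one : ∀ a b : M, a < b ↔ ∃ c, a + c + 1 = b
  zero_lt_one : (0 : M) < 1
  one_lt_or_eq_of_pos : ∀ a : M, 0 < a → 1 < a ∨ 1 = a
  zero_lt_or_eq : ∀ a : M, 0 < a ∨ 0 = a

def EvenOrOdd {M : Type*} [Add M] [One M] (y : M) : Prop := ∃ z, z + z = y ∨ z + z + 1 = y

namespace PAminusAxioms

variable {M : Type*} [Zero M] [One M] [Add M] [Mul M] [LT M] (h : PAminusAxioms M)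
include h

lemma zero_add (a : M) : 0 + a = a := by rw [h.add_comm, h.add_zero]

lemma add_right_cancel {a b c : M} (e : a + c = b + c) : a = b := by
  rcases h.lt_trichotomy a b with (hab | hab) | hba
  · exact absurd (e ▸ h.add_lt_add_right a b c hab) (h.lt_irrefl _)
  · exact hab
  · exact absurd (e ▸ h.add_lt_add_right b a c hba) (h.lt_irrefl _)

lemma lt_add_one (a : M) : a < a + 1 :=
  (h.lt_iff_exists_add_one a (a + 1)).2 ⟨0, by rw [h.add_zero]⟩

lemma lt_add_of_pos {a c : M} (hc : 0 < c) : a < a + c := by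
  simpa only [h.zero_add, h.add_comm c a] using h.add_lt_add_right 0 c a hc

lemma lt_or_eq_of_lt_add_one {a b : M} (hab : a < b + 1) : a < b ∨ a = b := by
  obtain ⟨c, hc⟩ := (h.lt_iff_exists_add_one a (b + 1)).1 hab
  have hac : a + c = b := h.add_right_cancel hc
  rcases h.zero_lt_or_eq c with hc | rfl
  · exact Or.inl (hac ▸ h.lt_add_of_pos hc)
  · exact Or.inr (by rwa [h.add_zero] at hac)

lemma lt_or_eq_trans {a b c : M} (hab : a < b ∨ a = b) (hbc : b < c ∨ b = c) :
    a < c ∨ a = c := by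
  rcases hab with hab | rfl
  · rcases hbc with hbc | rfl
    · exact Or.inl (h.lt_trans a b c hab hbc)
    · exact Or.inl hab
  · exact hbc

lemma lt_or_eq_add_self (a : M) : a < a + a ∨ a = a + a := by
  rcases h.zero_lt_or_eq a with ha | rfl
  · exact Or.inl (h.lt_add_of_pos ha)
  · exact Or.inr (h.add_zero 0).symm

lemma eq_zero_of_lt_or_eq_zero {a : M} (ha : a < 0 ∨ a = 0) : a = 0 := by
  rcases ha with ha | ha
  · rcases h.zero_lt_or_eq a with ha' | ha'
    · exact absurd (h.lt_trans a 0 a ha ha') (h.lt_irrefl a)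
    · exact ha'.symm
  · exact ha

lemma eq_zero_of_add_self_eq_zero {y : M} (hy : y + y = 0) : y = 0 := by
  rcases h.zero_lt_or_eq y with hpos | rfl
  · exact absurd (h.lt_trans y 0 y (hy ▸ h.lt_add_of_pos hpos) hpos) (h.lt_irrefl y)
  · rfl

lemma exists_add_one_eq {a : M} (ha : 0 < a) : ∃ w, w + 1 = a := by
  rcases h.one_lt_or_eq_of_pos a ha with ha | rfl
  · obtain ⟨c, hc⟩ := (h.lt_iff_exists_add_one 1 a).1 ha
    exact ⟨1 + c, hc⟩
  · exact ⟨0, h.zero_add 1⟩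

lemma add_one_add_add_one (w : M) : w + 1 + (w + 1) = w + w + 1 + 1 := by
  rw [h.add_assoc w 1, h.add_comm 1 (w + 1), h.add_assoc w 1 1, ← h.add_assoc w w,
    ← h.add_assoc]

lemma evenOrOdd_zero : EvenOrOdd (0 : M) := ⟨0, Or.inl (h.add_zero 0)⟩

lemma evenOrOdd_add_one {a : M} (ha : EvenOrOdd a) : EvenOrOdd (a + 1) := by
  obtain ⟨z, rfl | rfl⟩ := ha
  · exact ⟨z, Or.inr rfl⟩
  · exact ⟨z + 1, Or.inl (h.add_one_add_add_one z)⟩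

lemma evenOrOdd_of_add_self_eq_add_one {x y : M}
    (hx : ∀ y, y + y < x ∨ y + y = x → EvenOrOdd y) (hy : y + y = x + 1) : EvenOrOdd y := by
  rcases h.zero_lt_or_eq y with hpos | rfl
  · obtain ⟨w, rfl⟩ := h.exists_add_one_eq hpos
    rw [h.add_one_add_add_one] at hy
    exact h.evenOrOdd_add_one (hx w (Or.inl (h.add_right_cancel hy ▸ h.lt_add_one (w + w))))
  · exact h.evenOrOdd_zero

end PAminusAxioms

/-- `z + z = y ∨ z + z + 1 = y`, where `&0` is the `y` bound by an outer `∀'` and `&1` is `z`.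
In the two formulas below, `var (Sum.inl (Sum.inr 0))` is their free variable `x`. -/
def evenOrOddBF : Lor.BoundedFormula (Fin 0 ⊕ Fin 1) 2 :=
  (addT &1 &1 =' &0) ⊔ (addT (addT &1 &1) oneT =' &0)

def evenOrOddUpTo : OneVarFormula :=
  ∀' ((ltBF &0 (var (Sum.inl (Sum.inr 0))) ⊔ (&0 =' var (Sum.inl (Sum.inr 0)))) ⟹
    ∃' evenOrOddBF)

def evenOrOddUpToHalf : OneVarFormula :=
  ∀' ((ltBF (addT &0 &0) (var (Sum.inl (Sum.inr 0))) ⊔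
      (addT &0 &0 =' var (Sum.inl (Sum.inr 0)))) ⟹ ∃' evenOrOddBF)

section LorOperations

attribute [local instance] Lor.instZero Lor.instOne Lor.instAdd Lor.instMul Lor.instLT

variable {M : Type*} [Lor.Structure M]

@[simp] lemma realize_zeroT {α : Type} (v : α → M) : (zeroT : Lor.Term α).realize v = 0 := by
  simp only [zeroT, Constants.term, Term.realize]
  exact congrArg _ (Subsingleton.elim _ _)

@[simp] lemma realize_oneT {α : Type} (v : α → M) : (oneT : Lor.Term α).realize v = 1 := by
  simp only [oneT, Constants.term, Term.realize]
  exact congrArg _ (Subsingleton.elim _ _)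

@[simp] lemma realize_addT {α : Type} (v : α → M) (t u : Lor.Term α) :
    (addT t u).realize v = t.realize v + u.realize v :=
  Term.realize_functions_apply₂

@[simp] lemma realize_mulT {α : Type} (v : α → M) (t u : Lor.Term α) :
    (mulT t u).realize v = t.realize v * u.realize v :=
  Term.realize_functions_apply₂

@[simp] lemma realize_ltBF {α : Type} {n : ℕ} (t u : Lor.Term (α ⊕ Fin n)) (v : α → M)
    (xs : Fin n → M) :
    (ltBF t u).Realize v xs ↔ t.realize (Sum.elim v xs) < u.realize (Sum.elim v xs) :=
  BoundedFormula.realize_rel₂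

@[simp] lemma realize_ltFml {α : Type} (t u : Lor.Term α) (v : α → M) :
    (ltFml t u).Realize v ↔ t.realize v < u.realize v :=
  Formula.realize_rel₂

theorem model_PAminus_iff : M ⊨ PAminus ↔ PAminusAxioms M := by
  rw [Theory.model_iff]
  simp only [PAminus, Set.mem_insert_iff, Set.mem_singleton_iff, forall_eq_or_imp, forall_eq,
    Sentence.Realize, Formula.Realize, BoundedFormula.realize_all, BoundedFormula.realize_ex,
    BoundedFormula.realize_imp, BoundedFormula.realize_inf, BoundedFormula.realize_sup,
    BoundedFormula.realize_not, BoundedFormula.realize_iff, BoundedFormula.realize_bdEqual,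
    realize_ltBF, realize_addT, realize_mulT, realize_zeroT, realize_oneT, and_imp]
  constructor
  · rintro ⟨h1, h2, h3, h4, h5, h6, h7, h8, h9, h10, h11, h12, h13, h14, ⟨h15, h15'⟩, h16⟩
    exact ⟨h1, h2, h3, h4, h5, h6, h7, h8, h9, h10, h11, h12, h13, h14, h15, h15', h16⟩
  · rintro ⟨h1, h2, h3, h4, h5, h6, h7, h8, h9, h10, h11, h12, h13, h14, h15, h15', h16⟩
    exact ⟨h1, h2, h3, h4, h5, h6, h7, h8, h9, h10, h11, h12, h13, h14, ⟨h15, h15'⟩, h16⟩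

theorem PAminus_models_iff (σ : Lor.Sentence) :
    PAminus ⊨ᵇ σ ↔ ∀ (M : Type) [Lor.Structure M], PAminusAxioms M → M ⊨ σ := by
  rw [Theory.models_sentence_iff]
  constructor
  · intro h M _ hM
    have : M ⊨ PAminus := model_PAminus_iff.2 hM
    have : Nonempty M := ⟨0⟩
    exact h (Theory.ModelType.of PAminus M)
  · intro h M
    exact h M (model_PAminus_iff.1 M.is_model)

theorem isCut_of_models {φ : OneVarFormula}
    (zero : ∀ (M : Type) [Lor.Structure M], PAminusAxioms M → φ.Realize fun _ => (0 : M))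
    (succ : ∀ (M : Type) [Lor.Structure M], PAminusAxioms M →
      ∀ x : M, (φ.Realize fun _ => x) → φ.Realize fun _ => x + 1)
    (down : ∀ (M : Type) [Lor.Structure M], PAminusAxioms M →
      ∀ x y : M, x < y → (φ.Realize fun _ => y) → φ.Realize fun _ => x) :
    IsCut φ := by
  refine ⟨⟨?_, ?_⟩, ?_⟩ <;> rw [PAminus_models_iff] <;> intro M _ h
  · simpa using zero M h
  · simpa [xT] using succ M h
  · simp only [realize_closeAll, Formula.realize_imp, Formula.realize_inf, realize_ltFml,
      Formula.realize_relabel, sumElim_finZero_const]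
    exact fun v ⟨hlt, hy⟩ => down M h _ _ hlt hy

theorem PAminus_models_allX_imp_iff (φ ψ : OneVarFormula) :
    PAminus ⊨ᵇ closeAll (allX (φ ⟹ ψ)) ↔ ∀ (M : Type) [Lor.Structure M],
      PAminusAxioms M → ∀ x : M, (φ.Realize fun _ => x) → ψ.Realize fun _ => x := by
  simp [PAminus_models_iff]

theorem PAminus_models_allS_iff_allS (φ ψ : OneVarFormula) :
    PAminus ⊨ᵇ (allS φ ⇔ allS ψ) ↔ ∀ (M : Type) [Lor.Structure M],
      PAminusAxioms M → ((∀ x : M, φ.Realize fun _ => x) ↔ ∀ x : M, ψ.Realize fun _ => x) := by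
  simp [PAminus_models_iff, allS]

@[simp] lemma realize_evenOrOddUpTo (x : M) :
    (evenOrOddUpTo.Realize fun _ => x) ↔ ∀ y : M, y < x ∨ y = x → EvenOrOdd y := by
  simp [evenOrOddUpTo, evenOrOddBF, Formula.Realize, Fin.snoc, EvenOrOdd]

@[simp] lemma realize_evenOrOddUpToHalf (x : M) :
    (evenOrOddUpToHalf.Realize fun _ => x) ↔ ∀ y : M, y + y < x ∨ y + y = x → EvenOrOdd y := by
  simp [evenOrOddUpToHalf, evenOrOddBF, Formula.Realize, Fin.snoc, EvenOrOdd]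

theorem isCut_evenOrOddUpTo : IsCut evenOrOddUpTo := by
  refine isCut_of_models (fun M _ h => ?_) (fun M _ h x hx => ?_) (fun M _ h x x' hxx' hx' => ?_)
  · simp only [realize_evenOrOddUpTo]
    intro y hy
    rw [h.eq_zero_of_lt_or_eq_zero hy]
    exact h.evenOrOdd_zero
  · simp only [realize_evenOrOddUpTo] at hx ⊢
    rintro y (hy | rfl)
    · exact hx y (h.lt_or_eq_of_lt_add_one hy)
    · exact h.evenOrOdd_add_one (hx x (Or.inr rfl))
  · simp only [realize_evenOrOddUpTo] at hx' ⊢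
    exact fun y hy => hx' y (h.lt_or_eq_trans hy (Or.inl hxx'))

theorem isCut_evenOrOddUpToHalf : IsCut evenOrOddUpToHalf := by
  refine isCut_of_models (fun M _ h => ?_) (fun M _ h x hx => ?_) (fun M _ h x x' hxx' hx' => ?_)
  · simp only [realize_evenOrOddUpToHalf]
    intro y hy
    rw [h.eq_zero_of_add_self_eq_zero (h.eq_zero_of_lt_or_eq_zero hy)]
    exact h.evenOrOdd_zero
  · simp only [realize_evenOrOddUpToHalf] at hx ⊢
    rintro y (hy | hy)
    · exact hx y (h.lt_or_eq_of_lt_add_one hy)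
    · exact h.evenOrOdd_of_add_self_eq_add_one hx hy
  · simp only [realize_evenOrOddUpToHalf] at hx' ⊢
    exact fun y hy => hx' y (h.lt_or_eq_trans hy (Or.inl hxx'))

theorem PAminus_models_evenOrOddUpTo_imp_upToHalf :
    PAminus ⊨ᵇ closeAll (allX (evenOrOddUpTo ⟹ evenOrOddUpToHalf)) := by
  rw [PAminus_models_allX_imp_iff]
  intro M _ h x
  simp only [realize_evenOrOddUpTo, realize_evenOrOddUpToHalf]
  exact fun hx y hy => hx y (h.lt_or_eq_trans (h.lt_or_eq_add_self y) hy)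

theorem PAminus_models_all_evenOrOddUpTo_iff_all_upToHalf :
    PAminus ⊨ᵇ (allS evenOrOddUpTo ⇔ allS evenOrOddUpToHalf) := by
  rw [PAminus_models_allS_iff_allS]
  intro M _ h
  refine ⟨fun hx x => ?_, fun hx x => ?_⟩
  · exact (PAminus_models_allX_imp_iff _ _).1 PAminus_models_evenOrOddUpTo_imp_upToHalf M h x
      (hx x)
  · simp only [realize_evenOrOddUpTo, realize_evenOrOddUpToHalf] at hx ⊢
    exact fun y _ => hx (y + y) y (Or.inr rfl)

end LorOperations

theorem PAminusAxioms.nonneg {R : Type*} [CommRing R] [LinearOrder R] [IsStrictOrderedRing R]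
    (hR : ∀ x : R, 0 < x → 1 ≤ x) : PAminusAxioms {x : R // 0 ≤ x} where
  add_assoc := _root_.add_assoc
  add_comm := _root_.add_comm
  mul_assoc := _root_.mul_assoc
  mul_comm := _root_.mul_comm
  mul_add := _root_.mul_add
  add_zero := _root_.add_zero
  mul_zero := MulZeroClass.mul_zero
  mul_one := _root_.mul_one
  lt_trans _ _ _ := _root_.lt_trans
  lt_irrefl := _root_.lt_irrefl
  lt_trichotomy a b := (_root_.lt_trichotomy a b).elim (Or.inl ∘ Or.inl) (Or.imp_left Or.inr)
  add_lt_add_right _ _ c hab := add_lt_add_left hab c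
  mul_lt_mul_right _ _ _ hc hab := mul_lt_mul_of_pos_right hab (pos_of_ne_zero hc)
  lt_iff_exists_add_one a b := by
    constructor
    · intro hab
      have : 1 ≤ (b : R) - a := hR _ (sub_pos.2 hab)
      exact ⟨⟨b - a - 1, by linarith⟩, Subtype.ext (by push_cast; ring)⟩
    · rintro ⟨c, rfl⟩
      rw [← Subtype.coe_lt_coe]
      push_cast
      linarith [c.2]
  zero_lt_one := _root_.zero_lt_one
  one_lt_or_eq_of_pos a ha := (hR a ha).lt_or_eq.imp id Subtype.ext
  zero_lt_or_eq a := a.2.lt_or_eq.imp id Subtype.ext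

namespace Polynomial

noncomputable def leadingCoeffNonnegCone : RingCone ℤ[X] where
  carrier := {p | 0 ≤ p.leadingCoeff}
  add_mem' {p q} hp hq := by
    change 0 ≤ p.leadingCoeff at hp
    change 0 ≤ q.leadingCoeff at hq
    change 0 ≤ (p + q).leadingCoeff
    rcases lt_trichotomy p.degree q.degree with h | h | h
    · rwa [leadingCoeff_add_of_degree_lt h]
    · by_cases hpq : p.leadingCoeff + q.leadingCoeff = 0
      · rw [leadingCoeff_eq_zero.1 (by omega : p.leadingCoeff = 0),
          leadingCoeff_eq_zero.1 (by omega : q.leadingCoeff = 0), add_zero, leadingCoeff_zero]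
      · rw [leadingCoeff_add_of_degree_eq h hpq]
        omega
    · rwa [leadingCoeff_add_of_degree_lt' h]
  mul_mem' {p q} hp hq := by
    change 0 ≤ (p * q).leadingCoeff
    rw [leadingCoeff_mul]
    exact mul_nonneg hp hq
  one_mem' := by simp
  zero_mem' := by simp
  eq_zero_of_mem_of_neg_mem' {p} hp hn := by
    change 0 ≤ (-p).leadingCoeff at hn
    rw [leadingCoeff_neg, Left.nonneg_neg_iff] at hn
    exact leadingCoeff_eq_zero.1 (le_antisymm hn hp)

instance : HasMemOrNegMem leadingCoeffNonnegCone where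
  mem_or_neg_mem p := by
    change 0 ≤ p.leadingCoeff ∨ 0 ≤ (-p).leadingCoeff
    rw [leadingCoeff_neg]
    omega

/-- Only a local instance: `ℤ[X]` has no canonical order. -/
noncomputable abbrev leadingCoeffOrder : LinearOrder ℤ[X] :=
  open Classical in LinearOrder.mkOfAddGroupCone leadingCoeffNonnegCone

attribute [local instance] leadingCoeffOrder

theorem isOrderedRing_leadingCoeffOrder : IsOrderedRing ℤ[X] :=
  IsOrderedRing.mkOfCone leadingCoeffNonnegCone

attribute [local instance] isOrderedRing_leadingCoeffOrder

theorem nonneg_iff_leadingCoeff_nonneg {p : ℤ[X]} : 0 ≤ p ↔ 0 ≤ p.leadingCoeff := by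
  change p - 0 ∈ leadingCoeffNonnegCone ↔ _
  rw [sub_zero]
  rfl

theorem one_le_of_pos {p : ℤ[X]} (hp : 0 < p) : 1 ≤ p := by
  rw [← sub_nonneg, nonneg_iff_leadingCoeff_nonneg]
  have hlc : 0 < p.leadingCoeff :=
    (nonneg_iff_leadingCoeff_nonneg.1 hp.le).lt_of_ne' (leadingCoeff_ne_zero.2 hp.ne')
  rcases Nat.eq_zero_or_pos p.natDegree with hdeg | hdeg
  · rw [eq_C_of_natDegree_eq_zero hdeg, ← C_1, ← C_sub, leadingCoeff_C]
    rw [leadingCoeff, hdeg] at hlc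
    omega
  · rw [leadingCoeff_sub_of_degree_lt (by rwa [degree_one, natDegree_pos_iff_degree_pos.symm])]
    exact hlc.le

theorem natDegree_eq_zero_of_add_self_le_X {y : ℤ[X]} (hy : 0 ≤ y) (hyX : y + y ≤ X) :
    y.natDegree = 0 := by
  by_contra hd
  set d := y.natDegree
  have hlc : 0 < y.leadingCoeff := (nonneg_iff_leadingCoeff_nonneg.1 hy).lt_of_ne'
    (leadingCoeff_ne_zero.2 (by rintro rfl; simp [d] at hd))
  set q := X - (y + y)
  have hq : q.coeff d < 0 := by
    have : (X : ℤ[X]).coeff d ≤ 1 := by rw [coeff_X]; split_ifs <;> omega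
    simp only [q, coeff_sub, coeff_add]
    change _ - (y.leadingCoeff + y.leadingCoeff) < 0
    omega
  have hqdeg : q.natDegree = d := by
    refine le_antisymm ((natDegree_sub_le _ _).trans (max_le ?_ ?_)) (le_natDegree_of_ne_zero hq.ne)
    · rw [natDegree_X]; omega
    · exact (natDegree_add_le _ _).trans (max_le le_rfl le_rfl)
  have := nonneg_iff_leadingCoeff_nonneg.1 (sub_nonneg.2 hyX : 0 ≤ q)
  rw [leadingCoeff, hqdeg] at this
  exact hq.not_ge this

theorem X_nonneg : (0 : ℤ[X]) ≤ X := by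
  rw [nonneg_iff_leadingCoeff_nonneg, leadingCoeff_X]
  exact zero_le_one

theorem not_evenOrOdd_X : ¬EvenOrOdd (⟨X, X_nonneg⟩ : {p : ℤ[X] // 0 ≤ p}) := by
  rintro ⟨z, hz | hz⟩ <;> have h1 := congrArg (coeff · 1) (congrArg Subtype.val hz)
  · simp only [Nonneg.coe_add, coeff_add, coeff_X_one] at h1
    omega
  · simp only [Nonneg.coe_add, Nonneg.coe_one, coeff_add, coeff_one, one_ne_zero, ↓reduceIte,
      add_zero, coeff_X_one] at h1
    omega

theorem evenOrOdd_of_add_self_le_X {y : {p : ℤ[X] // 0 ≤ p}} (hy : y + y ≤ ⟨X, X_nonneg⟩) :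
    EvenOrOdd y := by
  obtain ⟨y, hy0⟩ := y
  obtain ⟨c, rfl⟩ : ∃ c, y = C c :=
    ⟨_, eq_C_of_natDegree_eq_zero (natDegree_eq_zero_of_add_self_le_X hy0 hy)⟩
  rw [nonneg_iff_leadingCoeff_nonneg, leadingCoeff_C] at hy0
  obtain ⟨d, rfl | rfl⟩ := Int.even_or_odd' c <;>
    refine ⟨⟨C d, by rw [nonneg_iff_leadingCoeff_nonneg, leadingCoeff_C]; omega⟩, ?_⟩
  · exact Or.inl (Subtype.ext (by simp [two_mul]))
  · exact Or.inr (Subtype.ext (by simp [two_mul]))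

end Polynomial

abbrev Lor.structureOfOps (M : Type*) [Zero M] [One M] [Add M] [Mul M] [LT M] :
    Lor.Structure M where
  funMap {_} f := match f with
    | .zero => fun _ => 0
    | .one => fun _ => 1
    | .add => fun v => v 0 + v 1
    | .mul => fun v => v 0 * v 1
  RelMap {_} r := match r with
    | .lt => fun v => v 0 < v 1

section

attribute [local instance] Polynomial.leadingCoeffOrder Polynomial.isOrderedRing_leadingCoeffOrder

open Polynomial in
theorem not_PAminus_models_evenOrOddUpToHalf_imp_upTo :
    ¬PAminus ⊨ᵇ closeAll (allX (evenOrOddUpToHalf ⟹ evenOrOddUpTo)) := by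
  let _ := Lor.structureOfOps {p : ℤ[X] // 0 ≤ p}
  rw [PAminus_models_allX_imp_iff]
  intro H
  have h := H {p : ℤ[X] // 0 ≤ p} (PAminusAxioms.nonneg fun _ => one_le_of_pos) ⟨X, X_nonneg⟩
  simp only [realize_evenOrOddUpTo, realize_evenOrOddUpToHalf] at h
  exact not_evenOrOdd_X (h (fun y hy => evenOrOdd_of_add_self_le_X (le_iff_lt_or_eq.2 hy)) _
    (Or.inr rfl))

end

/-- There are cuts `φ₀(x)` and `φ₁(x)` such that `PA⁻` proves both
`∀x φ₀(x) ↔ ∀x φ₁(x)` and `∀x( φ₀(x) → φ₁(x) )`, but `PA⁻` does not prove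
`∀x( φ₁(x) → φ₀(x) )`. -/
theorem stmt11 :
    ∃ φ₀ φ₁ : OneVarFormula, IsCut φ₀ ∧ IsCut φ₁ ∧
      PAminus ⊨ᵇ (allS φ₀ ⇔ allS φ₁) ∧
        PAminus ⊨ᵇ closeAll (allX (φ₀ ⟹ φ₁)) ∧
          ¬ PAminus ⊨ᵇ closeAll (allX (φ₁ ⟹ φ₀)) :=
  ⟨evenOrOddUpTo, evenOrOddUpToHalf, isCut_evenOrOddUpTo, isCut_evenOrOddUpToHalf,
    PAminus_models_all_evenOrOddUpTo_iff_all_upToHalf, PAminus_models_evenOrOddUpTo_imp_upToHalf,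
    not_PAminus_models_evenOrOddUpToHalf_imp_upTo⟩
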